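/- Subdivision preserves colorful cuts: let G be a graph with edge coloring c using colors {1,...,p}, and let H be obtained from G by replacing one edge {v,w} of color i by a path v–x–y–w (with x,y new vertices), where edge {x,y} gets color i and edges {v,x}, {y,w} get two distinct new colors p+1, p+2. Then H has a colorful cut (using all p+2 colors) if and only if G has a colorful cut (using all p colors). -/

import Mathlib

open Set

/-- The edge cut of `S`: edges of `G` with exactly one endpoint in `S`. -/
def cutEdges {V : Type*} (G : SimpleGraph V) (S : Set V) : Set (Sym2 V) :=
  {e | e ∈ G.edgeSet ∧ ∃ u v, e = s(u, v) ∧ u ∈ S ∧ v ∉ S}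

/-!
The new colors `p + 1` and `p + 2` occur only on the edges `vx` and `yw`, so a colorful cut
of the subdivision separates `x` from `v` and `y` from `w`; conversely a cut of `G` extends in
exactly this way. For such cuts the edge `xy` is cut if and only if `vw` is, and it carries the
color of `vw`, so the cut of the subdivision sees exactly the colors seen by its trace on `G`,
together with `p + 1` and `p + 2`.
-/

section

variable {V : Type*}

lemma mk_mem_cutEdges_iff {G : SimpleGraph V} {S : Set V} {a b : V} :
    s(a, b) ∈ cutEdges G S ↔ G.Adj a b ∧ (a ∈ S ↔ b ∉ S) := by
  constructor
  · rintro ⟨hab, x, y, hxy, hx, hy⟩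
    rcases Sym2.eq_iff.mp hxy with ⟨rfl, rfl⟩ | ⟨rfl, rfl⟩ <;> exact ⟨hab, by tauto⟩
  · rintro ⟨hab, hS⟩
    by_cases ha : a ∈ S
    · exact ⟨hab, a, b, rfl, ha, hS.mp ha⟩
    · exact ⟨hab, b, a, Sym2.eq_swap, by tauto, ha⟩

lemma nonempty_and_ne_univ_of_mem_cutEdges {G : SimpleGraph V} {S : Set V} {e : Sym2 V}
    (he : e ∈ cutEdges G S) : S.Nonempty ∧ S ≠ univ := by
  obtain ⟨-, a, b, -, ha, hb⟩ := he
  exact ⟨⟨a, ha⟩, ne_univ_iff_exists_notMem S |>.mpr ⟨b, hb⟩⟩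

lemma map_mem_cutEdges_iff {W : Type*} {G : SimpleGraph V} {H : SimpleGraph W} (f : V → W)
    {S : Set W} {e : Sym2 V} (hG : e ∈ G.edgeSet) (hH : e.map f ∈ H.edgeSet) :
    e.map f ∈ cutEdges H S ↔ e ∈ cutEdges G (f ⁻¹' S) := by
  induction e using Sym2.ind with
  | h a b =>
    rw [Sym2.map_mk, mk_mem_cutEdges_iff, mk_mem_cutEdges_iff]
    exact ⟨fun h => ⟨hG, h.2⟩, fun h => ⟨hH, h.2⟩⟩

def IsColorfulCut (G : SimpleGraph V) (c : Sym2 V → ℕ) (n : ℕ) (S : Set V) : Prop :=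
  S.Nonempty ∧ S ≠ univ ∧ ∀ j ∈ Finset.Icc 1 n, ∃ e ∈ cutEdges G S, c e = j

/-- `x = inr 0` and `y = inr 1` are the two new vertices on the path `v – x – y – w`. -/
def subdivision (G : SimpleGraph V) (v w : V) : SimpleGraph (V ⊕ Fin 2) :=
  SimpleGraph.fromEdgeSet
    ((Sym2.map Sum.inl '' (G.edgeSet \ {s(v, w)})) ∪
      {s(Sum.inl v, Sum.inr 0), s(Sum.inr 0, Sum.inr 1), s(Sum.inr 1, Sum.inl w)})

lemma edgeSet_subdivision (G : SimpleGraph V) (v w : V) :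
    (subdivision G v w).edgeSet = (Sym2.map Sum.inl '' (G.edgeSet \ {s(v, w)})) ∪
      {s(Sum.inl v, Sum.inr 0), s(Sum.inr 0, Sum.inr 1), s(Sum.inr 1, Sum.inl w)} := by
  rw [subdivision, SimpleGraph.edgeSet_fromEdgeSet, sdiff_eq_left, disjoint_left]
  rintro e (⟨e', ⟨he', -⟩, rfl⟩ | he) hdiag
  · exact G.not_isDiag_of_mem_edgeSet he' ((Sym2.isDiag_map Sum.inl_injective).mp hdiag)
  · rcases he with rfl | rfl | rfl <;> simp at hdiag

/-- Puts `x` on the other side from `v` and `y` on the other side from `w`. -/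
def liftCut (S : Set V) (v w : V) : Set (V ⊕ Fin 2) :=
  Sum.elim S ![v ∉ S, w ∉ S]

structure IsSubdivisionColoring (G : SimpleGraph V) (v w : V) (p : ℕ) (c : Sym2 V → ℕ)
    (c' : Sym2 (V ⊕ Fin 2) → ℕ) : Prop where
  old : ∀ e ∈ G.edgeSet \ {s(v, w)}, c' (Sym2.map Sum.inl e) = c e
  mid : c' s(Sum.inr 0, Sum.inr 1) = c s(v, w)
  new₁ : c' s(Sum.inl v, Sum.inr 0) = p + 1
  new₂ : c' s(Sum.inr 1, Sum.inl w) = p + 2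

namespace IsSubdivisionColoring

variable {G : SimpleGraph V} {v w : V} {p : ℕ} {c : Sym2 V → ℕ} {c' : Sym2 (V ⊕ Fin 2) → ℕ}

lemma eq_new_edge_of_lt (hc : IsSubdivisionColoring G v w p c c') (hvw : G.Adj v w)
    (hle : ∀ e ∈ G.edgeSet, c e ≤ p) {e : Sym2 (V ⊕ Fin 2)}
    (he : e ∈ (subdivision G v w).edgeSet) (hlt : p < c' e) :
    e = s(Sum.inl v, Sum.inr 0) ∨ e = s(Sum.inr 1, Sum.inl w) := by
  rw [edgeSet_subdivision] at he
  rcases he with ⟨e', he', rfl⟩ | rfl | rfl | rfl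
  · have := hle e' he'.1
    rw [hc.old e' he'] at hlt
    omega
  · exact Or.inl rfl
  · have := hle s(v, w) hvw
    rw [hc.mid] at hlt
    omega
  · exact Or.inr rfl

lemma image_cutEdges (hc : IsSubdivisionColoring G v w p c c') (hvw : G.Adj v w)
    {S : Set (V ⊕ Fin 2)}
    (hx : s(Sum.inl v, Sum.inr 0) ∈ cutEdges (subdivision G v w) S)
    (hy : s(Sum.inr 1, Sum.inl w) ∈ cutEdges (subdivision G v w) S) :
    c' '' cutEdges (subdivision G v w) S = c '' cutEdges G (Sum.inl ⁻¹' S) ∪ {p + 1, p + 2} := by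
  have hmid : s(Sum.inr 0, Sum.inr 1) ∈ cutEdges (subdivision G v w) S ↔
      s(v, w) ∈ cutEdges G (Sum.inl ⁻¹' S) := by
    have hadj : (subdivision G v w).Adj (Sum.inr 0) (Sum.inr 1) := by simp [subdivision]
    rw [mk_mem_cutEdges_iff] at hx hy ⊢
    rw [mk_mem_cutEdges_iff, mem_preimage, mem_preimage]
    tauto
  have hold (e) (he : e ∈ G.edgeSet \ {s(v, w)}) :
      Sym2.map Sum.inl e ∈ cutEdges (subdivision G v w) S ↔ e ∈ cutEdges G (Sum.inl ⁻¹' S) :=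
    map_mem_cutEdges_iff Sum.inl he.1 (by rw [edgeSet_subdivision]; exact Or.inl ⟨e, he, rfl⟩)
  ext j
  constructor
  · rintro ⟨e, he, rfl⟩
    have heH := he.1
    rw [edgeSet_subdivision] at heH
    rcases heH with ⟨e', he', rfl⟩ | rfl | rfl | rfl
    · exact Or.inl ⟨e', (hold e' he').mp he, (hc.old e' he').symm⟩
    · exact Or.inr (by simp [hc.new₁])
    · exact Or.inl ⟨s(v, w), hmid.mp he, hc.mid.symm⟩
    · exact Or.inr (by simp [hc.new₂])
  · rintro (⟨e, he, rfl⟩ | (rfl | rfl))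
    · by_cases hevw : e = s(v, w)
      · subst hevw
        exact ⟨_, hmid.mpr he, hc.mid⟩
      · exact ⟨_, (hold e ⟨he.1, hevw⟩).mpr he, hc.old e ⟨he.1, hevw⟩⟩
    · exact ⟨_, hx, hc.new₁⟩
    · exact ⟨_, hy, hc.new₂⟩

lemma isColorfulCut_preimage_inl (hc : IsSubdivisionColoring G v w p c c') (hvw : G.Adj v w)
    (hrange : ∀ e ∈ G.edgeSet, c e ∈ Finset.Icc 1 p) {S : Set (V ⊕ Fin 2)}
    (hS : IsColorfulCut (subdivision G v w) c' (p + 2) S) :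
    IsColorfulCut G c p (Sum.inl ⁻¹' S) := by
  obtain ⟨-, -, hcol⟩ := hS
  have hle (e) (he : e ∈ G.edgeSet) : c e ≤ p := (Finset.mem_Icc.mp (hrange e he)).2
  have hx : s(Sum.inl v, Sum.inr 0) ∈ cutEdges (subdivision G v w) S := by
    obtain ⟨e, he, hce⟩ := hcol (p + 1) (by simp)
    rcases hc.eq_new_edge_of_lt hvw hle he.1 (by omega) with rfl | rfl
    · exact he
    · rw [hc.new₂] at hce
      omega
  have hy : s(Sum.inr 1, Sum.inl w) ∈ cutEdges (subdivision G v w) S := by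
    obtain ⟨e, he, hce⟩ := hcol (p + 2) (by simp)
    rcases hc.eq_new_edge_of_lt hvw hle he.1 (by omega) with rfl | rfl
    · rw [hc.new₁] at hce
      omega
    · exact he
  have hcolG (j) (hj : j ∈ Finset.Icc 1 p) : ∃ e ∈ cutEdges G (Sum.inl ⁻¹' S), c e = j := by
    have hj' : j ∈ c' '' cutEdges (subdivision G v w) S :=
      hcol j (by simp only [Finset.mem_Icc] at hj ⊢; omega)
    rw [hc.image_cutEdges hvw hx hy] at hj'
    rcases hj' with hj' | hj'
    · exact hj'
    · simp only [Finset.mem_Icc, mem_insert_iff, mem_singleton_iff] at hj hj'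
      omega
  obtain ⟨e, he, -⟩ := hcolG _ (hrange s(v, w) hvw)
  obtain ⟨hne, hne_univ⟩ := nonempty_and_ne_univ_of_mem_cutEdges he
  exact ⟨hne, hne_univ, hcolG⟩

lemma isColorfulCut_liftCut (hc : IsSubdivisionColoring G v w p c c') (hvw : G.Adj v w)
    {S : Set V} (hS : IsColorfulCut G c p S) :
    IsColorfulCut (subdivision G v w) c' (p + 2) (liftCut S v w) := by
  obtain ⟨-, -, hcol⟩ := hS
  have hx : s(Sum.inl v, Sum.inr 0) ∈ cutEdges (subdivision G v w) (liftCut S v w) :=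
    mk_mem_cutEdges_iff.mpr ⟨by simp [subdivision], show v ∈ S ↔ ¬v ∉ S by tauto⟩
  have hy : s(Sum.inr 1, Sum.inl w) ∈ cutEdges (subdivision G v w) (liftCut S v w) :=
    mk_mem_cutEdges_iff.mpr ⟨by simp [subdivision], show w ∉ S ↔ w ∉ S from Iff.rfl⟩
  obtain ⟨hne, hne_univ⟩ := nonempty_and_ne_univ_of_mem_cutEdges hx
  refine ⟨hne, hne_univ, fun j hj => ?_⟩
  change j ∈ c' '' _
  rw [hc.image_cutEdges hvw hx hy]
  by_cases hjp : j ≤ p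
  · exact Or.inl (hcol j (by simp only [Finset.mem_Icc] at hj ⊢; omega))
  · refine Or.inr ?_
    simp only [Finset.mem_Icc, mem_insert_iff, mem_singleton_iff] at hj ⊢
    omega

end IsSubdivisionColoring

end

theorem stmt11_general {V : Type*} (G : SimpleGraph V) (p : ℕ)
    (c : Sym2 V → ℕ) (hrange : ∀ e ∈ G.edgeSet, c e ∈ Finset.Icc 1 p)
    (v w : V) (hvw : G.Adj v w)
    (H : SimpleGraph (V ⊕ Fin 2))
    (hH : H = SimpleGraph.fromEdgeSet
      ((Sym2.map Sum.inl '' (G.edgeSet \ {s(v, w)})) ∪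
        {s(Sum.inl v, Sum.inr 0), s(Sum.inr 0, Sum.inr 1), s(Sum.inr 1, Sum.inl w)}))
    (c' : Sym2 (V ⊕ Fin 2) → ℕ)
    (hold : ∀ e ∈ G.edgeSet \ {s(v, w)}, c' (Sym2.map Sum.inl e) = c e)
    (hmid : c' s(Sum.inr 0, Sum.inr 1) = c s(v, w))
    (hnew1 : c' s(Sum.inl v, Sum.inr 0) = p + 1)
    (hnew2 : c' s(Sum.inr 1, Sum.inl w) = p + 2) :
    (∃ S : Set (V ⊕ Fin 2), S.Nonempty ∧ S ≠ Set.univ ∧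
        ∀ j ∈ Finset.Icc 1 (p + 2), ∃ e ∈ cutEdges H S, c' e = j) ↔
      (∃ S : Set V, S.Nonempty ∧ S ≠ Set.univ ∧
        ∀ j ∈ Finset.Icc 1 p, ∃ e ∈ cutEdges G S, c e = j) := by
  obtain rfl : H = subdivision G v w := hH
  have hc : IsSubdivisionColoring G v w p c c' := ⟨hold, hmid, hnew1, hnew2⟩
  exact ⟨fun ⟨_, hS⟩ => ⟨_, hc.isColorfulCut_preimage_inl hvw hrange hS⟩,
    fun ⟨_, hS⟩ => ⟨_, hc.isColorfulCut_liftCut hvw hS⟩⟩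

/-- Subdivision preserves colorful cuts: replacing an edge `{v,w}` of color `i` by a path
`v–x–y–w`, where `{x,y}` keeps color `i` and `{v,x}`, `{y,w}` get two distinct new
colors `p+1, p+2`, preserves the existence of a colorful cut. -/
theorem stmt11 {V : Type*} [Fintype V] (G : SimpleGraph V) (p : ℕ)
    (c : Sym2 V → ℕ) (hrange : ∀ e ∈ G.edgeSet, c e ∈ Finset.Icc 1 p)
    (hsurj : ∀ j ∈ Finset.Icc 1 p, ∃ e ∈ G.edgeSet, c e = j)
    (v w : V) (hvw : G.Adj v w)
    (H : SimpleGraph (V ⊕ Fin 2))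
    (hH : H = SimpleGraph.fromEdgeSet
      ((Sym2.map Sum.inl '' (G.edgeSet \ {s(v, w)})) ∪
        {s(Sum.inl v, Sum.inr 0), s(Sum.inr 0, Sum.inr 1), s(Sum.inr 1, Sum.inl w)}))
    (c' : Sym2 (V ⊕ Fin 2) → ℕ)
    (hold : ∀ e ∈ G.edgeSet \ {s(v, w)}, c' (Sym2.map Sum.inl e) = c e)
    (hmid : c' s(Sum.inr 0, Sum.inr 1) = c s(v, w))
    (hnew1 : c' s(Sum.inl v, Sum.inr 0) = p + 1)
    (hnew2 : c' s(Sum.inr 1, Sum.inl w) = p + 2) :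
    (∃ S : Set (V ⊕ Fin 2), S.Nonempty ∧ S ≠ Set.univ ∧
        ∀ j ∈ Finset.Icc 1 (p + 2), ∃ e ∈ cutEdges H S, c' e = j) ↔
      (∃ S : Set V, S.Nonempty ∧ S ≠ Set.univ ∧
        ∀ j ∈ Finset.Icc 1 p, ∃ e ∈ cutEdges G S, c e = j) :=
  stmt11_general G p c hrange v w hvw H hH c' hold hmid hnew1 hnew2
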